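/- Let T be a 3-form on R^7 with the standard G2 structure satisfying the characteristic torsion identity with Lee form θ and scalar λ. Then the full contraction of σ^T with ψ satisfies σ^T_{jabc} ψ_{jabc} = -2||T||² + 12||θ||² + 12λ², where σ^T_{jabc} includes the terms T_{jas}T_{bcs} cyclically, using σ^T(X,Y,Z,V) with orthonormal frame contraction giving σ^T_{jabc}ψ_{jabc} = 3 T_{jas} T_{bcs} ψ_{jabc}. -/

import Mathlib

/-- Kronecker delta on `Fin 7`. -/
def kd (a b : Fin 7) : ℝ := if a = b then 1 else 0

/-- Components of the basis monomial `e_a ∧ e_b ∧ e_c` evaluated on `(e_i, e_j, e_k)`. -/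
def m3 (a b c i j k : Fin 7) : ℝ :=
  Matrix.det !![kd a i, kd a j, kd a k; kd b i, kd b j, kd b k; kd c i, kd c j, kd c k]

/-- Components of the basis monomial `e_a ∧ e_b ∧ e_c ∧ e_d`. -/
def m4 (a b c d i j k l : Fin 7) : ℝ :=
  Matrix.det !![kd a i, kd a j, kd a k, kd a l; kd b i, kd b j, kd b k, kd b l;
                kd c i, kd c j, kd c k, kd c l; kd d i, kd d j, kd d k, kd d l]

/-- Components of the standard `G₂` three-form
`φ = e₁₂₇ + e₁₃₅ - e₁₄₆ - e₂₃₆ - e₂₄₅ + e₃₄₇ + e₅₆₇` on `ℝ⁷`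
(indices shifted to `0,…,6`). -/
def phi3 (i j k : Fin 7) : ℝ :=
  m3 0 1 6 i j k + m3 0 2 4 i j k - m3 0 3 5 i j k - m3 1 2 5 i j k
    - m3 1 3 4 i j k + m3 2 3 6 i j k + m3 4 5 6 i j k

/-- Components of the Hodge dual four-form
`ψ = *φ = e₁₂₃₄ + e₃₄₅₆ + e₁₂₅₆ - e₂₄₆₇ + e₁₃₆₇ + e₂₃₅₇ + e₁₄₅₇`. -/
def psi4 (i j k l : Fin 7) : ℝ :=
  m4 0 1 2 3 i j k l + m4 2 3 4 5 i j k l + m4 0 1 4 5 i j k l - m4 1 3 5 6 i j k l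
    + m4 0 2 5 6 i j k l + m4 1 2 4 6 i j k l + m4 0 3 4 6 i j k l

/-- Components of the 4-form `σ^T = (1/2) Σ_j (e_j⌟T) ∧ (e_j⌟T)`. -/
def sigmaT (T : Fin 7 → Fin 7 → Fin 7 → ℝ) (x y z v : Fin 7) : ℝ :=
  ∑ i : Fin 7, (T i x y * T i z v - T i x z * T i y v + T i x v * T i y z)

/-! Both identities are index relabellings. With `P_{jabc} = T_{jas} T_{bcs}`, cyclicity of `T`
turns `σ^T_{jabc}` into `P_{jabc} - P_{jbac} + P_{jcab}`, and the antisymmetry of `ψ` makes each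
of the three terms contribute `P_{jabc} ψ_{jabc}`. For the norm, contract the characteristic
identity with `T_{klm}`: the symmetries of `T` reduce its three `ψ`-terms to
`-(3/2) P_{jabc} ψ_{jabc}`, while the definitions of `θ` and `λ` make the remaining two terms
`6 ‖θ‖²` and `6 λ²`. -/

open Finset

section Contraction

variable {ι : Type*}

theorem cyclic_of_antisymm {T : ι → ι → ι → ℝ} (h12 : ∀ i j k, T i j k = -T j i k)
    (h23 : ∀ i j k, T i j k = -T i k j) (i j k : ι) : T i j k = T j k i := by
  rw [h12, h23, neg_neg]

variable [Fintype ι]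

theorem sum_swap_mul_of_antisymm {S : ι → ι → ι → ℝ} (hS : ∀ k l m, S l k m = -S k l m)
    (X : ι → ι → ι → ℝ) :
    ∑ k, ∑ l, ∑ m, X l k m * S k l m = -∑ k, ∑ l, ∑ m, X k l m * S k l m := by
  rw [sum_comm]
  simp only [← sum_neg_distrib, ← mul_neg, ← hS]

theorem sum_rotate_mul_of_cyclic {S : ι → ι → ι → ℝ} (hS : ∀ k l m, S l m k = S k l m)
    (X : ι → ι → ι → ℝ) :
    ∑ k, ∑ l, ∑ m, X m k l * S k l m = ∑ k, ∑ l, ∑ m, X k l m * S k l m := by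
  rw [sum_comm_cycle]
  exact sum_congr rfl fun k _ => sum_congr rfl fun l _ => sum_congr rfl fun m _ => by rw [hS]

def contractLast (T : ι → ι → ι → ℝ) (j a b c : ι) : ℝ := ∑ s, T j a s * T b c s

def contractFirstTwo (T : ι → ι → ι → ℝ) (ψ : ι → ι → ι → ι → ℝ) (k l m : ι) : ℝ :=
  ∑ j, ∑ s, T j s k * ψ j s l m

theorem sum_contractFirstTwo_mul {T : ι → ι → ι → ℝ} (hT : ∀ i j k, T i j k = T j k i)
    (ψ : ι → ι → ι → ι → ℝ) :
    ∑ k, ∑ l, ∑ m, contractFirstTwo T ψ k l m * T k l m =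
      ∑ j, ∑ a, ∑ b, ∑ c, contractLast T j a b c * ψ j a b c := by
  simp only [contractFirstTwo, contractLast, sum_mul]
  calc _ = ∑ l, ∑ m, ∑ k, ∑ j, ∑ s, T j s k * ψ j s l m * T k l m := sum_comm_cycle.symm
    _ = ∑ l, ∑ m, ∑ j, ∑ s, ∑ k, T j s k * ψ j s l m * T k l m :=
      sum_congr rfl fun l _ => sum_congr rfl fun m _ => sum_comm_cycle.symm
    _ = ∑ l, ∑ j, ∑ s, ∑ m, ∑ k, T j s k * ψ j s l m * T k l m :=
      sum_congr rfl fun l _ => sum_comm_cycle.symm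
    _ = ∑ j, ∑ s, ∑ l, ∑ m, ∑ k, T j s k * ψ j s l m * T k l m := sum_comm_cycle.symm
    _ = _ := sum_congr rfl fun j _ => sum_congr rfl fun s _ => sum_congr rfl fun l _ =>
      sum_congr rfl fun m _ => sum_congr rfl fun k _ => by rw [hT k l m]; ring

end Contraction

theorem m4_eq_det (a b c d : Fin 7) (v : Fin 4 → Fin 7) :
    m4 a b c d (v 0) (v 1) (v 2) (v 3) =
      (Matrix.of fun r s => kd (![a, b, c, d] r) (v s)).det := by
  rw [m4]; congr 1; ext r s; fin_cases r <;> fin_cases s <;> rfl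

theorem m4_comp_perm (a b c d : Fin 7) (σ : Equiv.Perm (Fin 4)) (v : Fin 4 → Fin 7) :
    m4 a b c d (v (σ 0)) (v (σ 1)) (v (σ 2)) (v (σ 3)) =
      σ.sign * m4 a b c d (v 0) (v 1) (v 2) (v 3) := by
  rw [m4_eq_det _ _ _ _ v, ← Matrix.det_permute']
  exact m4_eq_det a b c d (v ∘ σ)

theorem psi4_comp_perm (σ : Equiv.Perm (Fin 4)) (v : Fin 4 → Fin 7) :
    psi4 (v (σ 0)) (v (σ 1)) (v (σ 2)) (v (σ 3)) = σ.sign * psi4 (v 0) (v 1) (v 2) (v 3) := by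
  simp only [psi4, m4_comp_perm]; ring

theorem psi4_swap_12 (i j k l : Fin 7) : psi4 i k j l = -psi4 i j k l := by
  simpa [Equiv.swap_apply_of_ne_of_ne] using psi4_comp_perm (Equiv.swap 1 2) ![i, j, k, l]

theorem psi4_swap_23 (i j k l : Fin 7) : psi4 i j l k = -psi4 i j k l := by
  simpa [Equiv.swap_apply_of_ne_of_ne] using psi4_comp_perm (Equiv.swap 2 3) ![i, j, k, l]

theorem psi4_rotate (i j k l : Fin 7) : psi4 i j k l = -psi4 j k l i := by
  simpa [eq_neg_iff_add_eq_zero, add_comm] using psi4_comp_perm (finRotate 4) ![i, j, k, l]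

theorem sigmaT_eq_contractLast {T : Fin 7 → Fin 7 → Fin 7 → ℝ} (hT : ∀ i j k, T i j k = T j k i)
    (j a b c : Fin 7) :
    sigmaT T j a b c = contractLast T j a b c - contractLast T j b a c + contractLast T j c a b := by
  simp only [sigmaT, contractLast, ← sum_sub_distrib, ← sum_add_distrib]
  exact sum_congr rfl fun i _ => by rw [hT i j a, hT i b c, hT i j b, hT i a c, hT i j c, hT i a b]

theorem sum_sigmaT_mul_psi4 {T : Fin 7 → Fin 7 → Fin 7 → ℝ} (hT : ∀ i j k, T i j k = T j k i) :
    ∑ j, ∑ a, ∑ b, ∑ c, sigmaT T j a b c * psi4 j a b c =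
      3 * ∑ j, ∑ a, ∑ b, ∑ c, contractLast T j a b c * psi4 j a b c := by
  rw [mul_sum]
  refine sum_congr rfl fun j _ => ?_
  have hswap := sum_swap_mul_of_antisymm (psi4_swap_12 j) (contractLast T j)
  have hrot := sum_rotate_mul_of_cyclic (S := psi4 j)
    (fun a b c => by rw [psi4_swap_23 j b a c, psi4_swap_12 j a b c, neg_neg]) (contractLast T j)
  simp only [sigmaT_eq_contractLast hT, add_mul, sub_mul, sum_add_distrib, sum_sub_distrib]
  rw [hswap, hrot]
  ring

theorem sum_theta_psi4_mul_eq {T : Fin 7 → Fin 7 → Fin 7 → ℝ} {θ : Fin 7 → ℝ}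
    (hθ : ∀ i : Fin 7, θ i =
      (1 / 6 : ℝ) * (∑ j : Fin 7, ∑ k : Fin 7, ∑ l : Fin 7, T j k l * psi4 j k l i)) :
    ∑ k, ∑ l, ∑ m, (∑ s, θ s * psi4 s k l m) * T k l m = -6 * ∑ s, θ s * θ s := by
  have hcontr (s : Fin 7) : ∑ k, ∑ l, ∑ m, psi4 s k l m * T k l m = -6 * θ s := by
    simp only [psi4_rotate s, neg_mul, sum_neg_distrib, mul_comm (psi4 _ _ _ _)]
    rw [hθ s]
    ring
  calc _ = ∑ k, ∑ s, ∑ l, ∑ m, θ s * (psi4 s k l m * T k l m) := by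
        simp only [sum_mul, mul_assoc]
        exact sum_congr rfl fun k _ => sum_comm_cycle
    _ = ∑ s, θ s * (-6 * θ s) := by
        rw [sum_comm]
        simp only [← mul_sum, hcontr]
    _ = _ := by rw [mul_sum]; exact sum_congr rfl fun s _ => by ring

theorem sum_mul_self_eq_of_torsion_identity {T : Fin 7 → Fin 7 → Fin 7 → ℝ} {θ : Fin 7 → ℝ}
    {lam : ℝ} (hT1 : ∀ i j k, T i j k = -T j i k) (hT2 : ∀ i j k, T i j k = -T i k j)
    (hchar : ∀ k l m : Fin 7,
      T k l m =
        -(1 / 2 : ℝ) * (∑ j : Fin 7, ∑ s : Fin 7, T j s k * psi4 j s l m)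
        + (1 / 2 : ℝ) * (∑ j : Fin 7, ∑ s : Fin 7, T j s l * psi4 j s k m)
        - (1 / 2 : ℝ) * (∑ j : Fin 7, ∑ s : Fin 7, T j s m * psi4 j s k l)
        - (∑ s : Fin 7, θ s * psi4 s k l m) + lam * phi3 k l m)
    (hθ : ∀ i : Fin 7, θ i =
      (1 / 6 : ℝ) * (∑ j : Fin 7, ∑ k : Fin 7, ∑ l : Fin 7, T j k l * psi4 j k l i))
    (hlam : lam = (1 / 6 : ℝ) * (∑ k : Fin 7, ∑ l : Fin 7, ∑ m : Fin 7, T k l m * phi3 k l m)) :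
    ∑ i, ∑ j, ∑ k, T i j k * T i j k =
      -(3 / 2) * (∑ j, ∑ a, ∑ b, ∑ c, contractLast T j a b c * psi4 j a b c)
        + 6 * (∑ i, θ i * θ i) + 6 * lam ^ 2 := by
  have hcyc := cyclic_of_antisymm hT1 hT2
  set Y := contractFirstTwo T psi4
  have hexpand (k l m : Fin 7) : T k l m * T k l m =
      (-(1 / 2) * Y k l m + (1 / 2) * Y l k m - (1 / 2) * Y m k l
        - (∑ s, θ s * psi4 s k l m) + lam * phi3 k l m) * T k l m := by
    nth_rewrite 1 [hchar k l m]; rfl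
  have hswap := sum_swap_mul_of_antisymm (fun k l m => hT1 l k m) Y
  have hrot := sum_rotate_mul_of_cyclic (fun k l m => (hcyc k l m).symm) Y
  have hphi : ∑ k, ∑ l, ∑ m, phi3 k l m * T k l m = 6 * lam := by
    simp only [hlam, mul_comm (phi3 _ _ _)]; ring
  simp only [hexpand, add_mul, sub_mul, mul_assoc, sum_add_distrib, sum_sub_distrib, ← mul_sum]
  rw [hswap, hrot, sum_contractFirstTwo_mul hcyc, sum_theta_psi4_mul_eq hθ, hphi]
  ring

/-- `σ^T_{jabc} ψ_{jabc} = 3 T_{jas} T_{bcs} ψ_{jabc} = -2‖T‖² + 12‖θ‖² + 12λ²`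
for the characteristic torsion of an integrable `G₂` structure, where `‖T‖²` denotes the full
tensor contraction `T_{ijk}T_{ijk}`. -/
theorem g2_sigma_psi_contraction
    (T : Fin 7 → Fin 7 → Fin 7 → ℝ) (θ : Fin 7 → ℝ) (lam : ℝ)
    (hT1 : ∀ i j k, T i j k = -T j i k) (hT2 : ∀ i j k, T i j k = -T i k j)
    (hchar : ∀ k l m : Fin 7,
      T k l m =
        -(1 / 2 : ℝ) * (∑ j : Fin 7, ∑ s : Fin 7, T j s k * psi4 j s l m)
        + (1 / 2 : ℝ) * (∑ j : Fin 7, ∑ s : Fin 7, T j s l * psi4 j s k m)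
        - (1 / 2 : ℝ) * (∑ j : Fin 7, ∑ s : Fin 7, T j s m * psi4 j s k l)
        - (∑ s : Fin 7, θ s * psi4 s k l m) + lam * phi3 k l m)
    (hθ : ∀ i : Fin 7, θ i =
      (1 / 6 : ℝ) * (∑ j : Fin 7, ∑ k : Fin 7, ∑ l : Fin 7, T j k l * psi4 j k l i))
    (hlam : lam = (1 / 6 : ℝ) * (∑ k : Fin 7, ∑ l : Fin 7, ∑ m : Fin 7, T k l m * phi3 k l m)) :
    (∑ j : Fin 7, ∑ a : Fin 7, ∑ b : Fin 7, ∑ c : Fin 7, sigmaT T j a b c * psi4 j a b c =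
      3 * ∑ j : Fin 7, ∑ a : Fin 7, ∑ b : Fin 7, ∑ c : Fin 7, ∑ s : Fin 7,
        T j a s * T b c s * psi4 j a b c) ∧
    (∑ j : Fin 7, ∑ a : Fin 7, ∑ b : Fin 7, ∑ c : Fin 7, sigmaT T j a b c * psi4 j a b c =
      -2 * (∑ i : Fin 7, ∑ j : Fin 7, ∑ k : Fin 7, T i j k * T i j k)
        + 12 * (∑ i : Fin 7, θ i * θ i) + 12 * lam ^ 2) := by
  have hsigma := sum_sigmaT_mul_psi4 (cyclic_of_antisymm hT1 hT2)
  have hnorm := sum_mul_self_eq_of_torsion_identity hT1 hT2 hchar hθ hlam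
  refine ⟨by simp only [hsigma, contractLast, sum_mul], ?_⟩
  rw [hsigma, hnorm]
  ring
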